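/- arXiv:2503.23207 — 7 statements merged into one kernel-verified Lean document; each statement's English description precedes it below -/
import Mathlib

section
/- If the line digraph of a digraph X admits a proper n-colouring (i.e., a homomorphism to the complete graph K_n), then X admits a proper 2^n-colouring. -/
/-- The vertices of the line digraph of a digraph `(V, E)`: the edges of the digraph. -/
def LineVerts (V : Type*) (E : V → V → Prop) : Type _ := {p : V × V // E p.1 p.2}

/-- The edge relation of the line digraph: there is an edge from `(x,y)` to `(y,z)`. -/
def LineEdge {V : Type*} (E : V → V → Prop) (a b : LineVerts V E) : Prop :=
  a.1.2 = b.1.1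

/-- If the line digraph of `X` admits a proper `n`-colouring, then `X` admits a proper
`2^n`-colouring. -/
theorem stmt0 {V : Type*} (E : V → V → Prop) (n : ℕ)
    (h : ∃ f : LineVerts V E → Fin n, ∀ a b, LineEdge E a b → f a ≠ f b) :
    ∃ g : V → Fin (2 ^ n), ∀ u v, E u v → g u ≠ g v := by
  classical
  obtain ⟨f, hf⟩ := h
  have hcard : Fintype.card (Set (Fin n)) = 2 ^ n := by
    simp
  let eqv : Set (Fin n) ≃ Fin (2 ^ n) :=
    (Fintype.equivFinOfCardEq hcard)
  let S : V → Set (Fin n) := fun v => {c | ∃ e : LineVerts V E, e.1.1 = v ∧ f e = c}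
  refine ⟨fun v => eqv (S v), ?_⟩
  intro u v huv hgu
  have hS : S u = S v := eqv.injective hgu
  let e : LineVerts V E := ⟨(u, v), huv⟩
  have hin : f e ∈ S u := ⟨e, rfl, rfl⟩
  rw [hS] at hin
  obtain ⟨b, hb1, hb2⟩ := hin
  exact hf e b hb1.symm hb2.symm
end

section
/- If a digraph X admits a proper C(n, ⌊n/2⌋)-colouring (a homomorphism to the complete graph on binomial(n, ⌊n/2⌋) vertices), then the line digraph δX admits a proper n-colouring. -/
/-- If `X` admits a proper `C(n, ⌊n/2⌋)`-colouring, then the line digraph of `X` admits a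
proper `n`-colouring. -/
theorem stmt1 {V : Type*} (E : V → V → Prop) (n : ℕ)
    (h : ∃ g : V → Fin (Nat.choose n (n / 2)), ∀ u v, E u v → g u ≠ g v) :
    ∃ f : LineVerts V E → Fin n, ∀ a b, LineEdge E a b → f a ≠ f b := by
  obtain ⟨g, hg⟩ := h
  have hcard : Fintype.card {s : Finset (Fin n) // s.card = n / 2} = Nat.choose n (n / 2) := by
    rw [Fintype.card_finset_len, Fintype.card_fin]
  let e : Fin (Nat.choose n (n / 2)) ≃ {s : Finset (Fin n) // s.card = n / 2} :=
    (Fintype.equivFinOfCardEq hcard).symm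
  have key : ∀ a : LineVerts V E, ((e (g a.1.1)).1 \ (e (g a.1.2)).1).Nonempty := by
    intro a
    rw [Finset.sdiff_nonempty]
    intro hsub
    have heq : e (g a.1.1) = e (g a.1.2) :=
      Subtype.ext (Finset.eq_of_subset_of_card_le hsub
        (by rw [(e (g a.1.1)).2, (e (g a.1.2)).2]))
    exact hg _ _ a.2 (e.injective heq)
  choose f hf using key
  refine ⟨f, ?_⟩
  intro a b hab heq
  have h1 := Finset.mem_sdiff.mp (hf a)
  have h2 := (Finset.mem_sdiff.mp (hf b)).1
  rw [hab] at h1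
  rw [heq] at h1
  exact h1.2 h2
end

section
/- Pultr adjunction, left-to-central direction: Let T be a (ρ,τ)-Pultr template with left functor Λ and central functor Γ. For any τ-structure X and ρ-structure Y, if there is a homomorphism ΛX → Y, then there is a homomorphism X → ΓY. -/
/-- A relational signature: a collection of relation symbols with arities. -/
structure Sig where
  symb : Type
  ar : symb → ℕ

/-- A relational structure over a signature. -/
structure Str (σ : Sig) where
  D : Type
  rel : ∀ s : σ.symb, (Fin (σ.ar s) → D) → Prop

/-- A homomorphism of relational structures: a relation-preserving map. -/
def IsHom {σ : Sig} (X Y : Str σ) (f : X.D → Y.D) : Prop :=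
  ∀ s t, X.rel s t → Y.rel s (f ∘ t)

/-- A `(ρ,τ)`-Pultr template: a ρ-structure `A`, a ρ-structure `B T` for each τ-symbol `T`,
and homomorphisms `ε T i : A → B T` for each `i ∈ [ar(T)]`. -/
structure PultrTemplate (ρ τ : Sig) where
  A : Str ρ
  B : τ.symb → Str ρ
  ε : ∀ T : τ.symb, Fin (τ.ar T) → (A.D → (B T).D)
  ε_hom : ∀ T i, IsHom A (B T) (ε T i)

/-- The central Pultr functor `Γ`: the domain of `ΓY` is the set of homomorphisms
`A → Y`, and `T(ΓY)` consists of the tuples `(ℓ∘ε_{1,T},…,ℓ∘ε_{t,T})` for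
homomorphisms `ℓ : B_T → Y`. -/
def Gamma {ρ τ : Sig} (𝕋 : PultrTemplate ρ τ) (Y : Str ρ) : Str τ where
  D := {h : 𝕋.A.D → Y.D // IsHom 𝕋.A Y h}
  rel T t := ∃ ℓ : (𝕋.B T).D → Y.D, IsHom (𝕋.B T) Y ℓ ∧
    ∀ i, (t i).1 = ℓ ∘ 𝕋.ε T i

/-- The carrier of the disjoint union used in the definition of the left Pultr functor:
a copy of `A` for each element of `X` and a copy of `B T` for each tuple in `T(X)`. -/
def LambdaCarrier {ρ τ : Sig} (𝕋 : PultrTemplate ρ τ) (X : Str τ) : Type _ :=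
  (X.D × 𝕋.A.D) ⊕ (Σ T : τ.symb, {t : Fin (τ.ar T) → X.D // X.rel T t} × (𝕋.B T).D)

/-- The gluing relation: `a^(x_j)` is identified with `(ε_{j,T}(a))^(x̄)` for each
`T ∈ τ`, `x̄ ∈ T(X)`, `j`, and `a ∈ A`. -/
def glue {ρ τ : Sig} (𝕋 : PultrTemplate ρ τ) (X : Str τ) :
    LambdaCarrier 𝕋 X → LambdaCarrier 𝕋 X → Prop := fun z w =>
  ∃ (T : τ.symb) (xt : {t : Fin (τ.ar T) → X.D // X.rel T t})
    (j : Fin (τ.ar T)) (a : 𝕋.A.D),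
    z = Sum.inl (xt.1 j, a) ∧ w = Sum.inr ⟨T, xt, 𝕋.ε T j a⟩

/-- The left Pultr functor `Λ`: the quotient of the disjoint union of copies of `A` and
of the `B T` under the coarsest equivalence generated by the gluing relation, with the
relations inherited from the copies. -/
def Lambda {ρ τ : Sig} (𝕋 : PultrTemplate ρ τ) (X : Str τ) : Str ρ where
  D := Quot (glue 𝕋 X)
  rel R t :=
    (∃ (x : X.D) (av : Fin (ρ.ar R) → 𝕋.A.D), 𝕋.A.rel R av ∧
      ∀ i, t i = Quot.mk _ (Sum.inl (x, av i)))
    ∨ (∃ (T : τ.symb) (xt : {t : Fin (τ.ar T) → X.D // X.rel T t})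
        (bv : Fin (ρ.ar R) → (𝕋.B T).D), (𝕋.B T).rel R bv ∧
      ∀ i, t i = Quot.mk _ (Sum.inr ⟨T, xt, bv i⟩))

/-- Pultr adjunction, left-to-central direction: if `ΛX → Y` then `X → ΓY`. -/
theorem stmt4 {ρ τ : Sig} (𝕋 : PultrTemplate ρ τ) (X : Str τ) (Y : Str ρ)
    (h : ∃ f, IsHom (Lambda 𝕋 X) Y f) :
    ∃ g, IsHom X (Gamma 𝕋 Y) g := by
  obtain ⟨f, hf⟩ := h
  refine ⟨fun x => ⟨fun a => f (Quot.mk _ (Sum.inl (x, a))), ?_⟩, ?_⟩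
  · intro R av hav
    exact hf R (fun i => Quot.mk _ (Sum.inl (x, av i)))
      (Or.inl ⟨x, av, hav, fun i => rfl⟩)
  · intro T t ht
    refine ⟨fun b => f (Quot.mk _ (Sum.inr ⟨T, ⟨t, ht⟩, b⟩)), ?_, ?_⟩
    · intro R bv hbv
      exact hf R (fun i => Quot.mk _ (Sum.inr ⟨T, ⟨t, ht⟩, bv i⟩))
        (Or.inr ⟨T, ⟨t, ht⟩, bv, hbv, fun i => rfl⟩)
    · intro i
      funext a
      exact congrArg f (Quot.sound ⟨T, ⟨t, ht⟩, i, a, rfl, rfl⟩)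
end

section
/- Pultr adjunction, central-to-left direction: Let T be a (ρ,τ)-Pultr template with left functor Λ and central functor Γ. For any τ-structure X and ρ-structure Y, if there is a homomorphism X → ΓY, then there is a homomorphism ΛX → Y. -/
/-- Pultr adjunction, central-to-left direction: if `X → ΓY` then `ΛX → Y`. -/
theorem stmt5 {ρ τ : Sig} (𝕋 : PultrTemplate ρ τ) (X : Str τ) (Y : Str ρ)
    (h : ∃ g, IsHom X (Gamma 𝕋 Y) g) :
    ∃ f, IsHom (Lambda 𝕋 X) Y f := by
  obtain ⟨g, hg⟩ := h
  have hrel : ∀ (T : τ.symb) (xt : {t : Fin (τ.ar T) → X.D // X.rel T t}),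
      ∃ ℓ : (𝕋.B T).D → Y.D, IsHom (𝕋.B T) Y ℓ ∧
        ∀ i, (g (xt.1 i)).1 = ℓ ∘ 𝕋.ε T i := fun T xt => hg T xt.1 xt.2
  choose ℓ hℓ hℓε using hrel
  set f0 : LambdaCarrier 𝕋 X → Y.D := fun z =>
    match z with
    | Sum.inl (x, a) => (g x).1 a
    | Sum.inr ⟨T, xt, b⟩ => ℓ T xt b with hf0
  have hresp : ∀ z w, glue 𝕋 X z w → f0 z = f0 w := by
    rintro z w ⟨T, xt, j, a, rfl, rfl⟩
    simpa [hf0] using congrFun (hℓε T xt j) a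
  refine ⟨Quot.lift f0 hresp, ?_⟩
  intro R t ht
  rcases ht with ⟨x, av, hav, heq⟩ | ⟨T, xt, bv, hbv, heq⟩
  · have : Y.rel R ((g x).1 ∘ av) := (g x).2 R av hav
    convert this using 1
    funext i
    exact congrArg (Quot.lift f0 hresp) (heq i)
  · have : Y.rel R (ℓ T xt ∘ bv) := hℓ T xt R bv hbv
    convert this using 1
    funext i
    exact congrArg (Quot.lift f0 hresp) (heq i)
end

section
/- Composition of classical and quantum homomorphisms: If X → X' (classical homomorphism), X' ⤳^k Y' (perfect k-compatible quantum assignment), and Y' → Y (classical homomorphism), then X ⤳^k Y. -/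
open Matrix

/-- Adjacency in the Gaifman graph: two distinct elements appearing in a common
constraint tuple. -/
def GaifmanAdj {σ : Sig} (X : Str σ) (x x' : X.D) : Prop :=
  x ≠ x' ∧ ∃ s t, X.rel s t ∧ (∃ i, t i = x) ∧ (∃ i, t i = x')

/-- `DistLE adj k x y`: there is a walk of length at most `k` from `x` to `y`. -/
inductive DistLE {D : Type*} (adj : D → D → Prop) : ℕ → D → D → Prop
  | refl (k : ℕ) (x : D) : DistLE adj k x x
  | step {k : ℕ} {x y z : D} : adj x y → DistLE adj k y z → DistLE adj (k + 1) x z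

/-- An orthogonal projection (as a complex matrix): Hermitian and idempotent. -/
def IsProj {d : ℕ} (Q : Matrix (Fin d) (Fin d) ℂ) : Prop :=
  Qᴴ = Q ∧ Q * Q = Q

/-- `QHom k X Y` (written `X ⤳ᵏ Y`): there is a perfect `k`-compatible quantum
assignment, i.e., a family of PVMs `{Q_{x,y}}_{y}` on a finite-dimensional Hilbert space,
one for each `x`, such that products of projectors along constraint tuples vanish on
non-admitted label tuples, and projectors at Gaifman distance at most `k` commute. -/
def QHom {σ : Sig} (k : ℕ) (X Y : Str σ) [Fintype Y.D] : Prop :=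
  ∃ d : ℕ, 0 < d ∧ ∃ Q : X.D → Y.D → Matrix (Fin d) (Fin d) ℂ,
    (∀ x y, IsProj (Q x y)) ∧
    (∀ x, ∑ y, Q x y = 1) ∧
    (∀ (s : σ.symb) (t : Fin (σ.ar s) → X.D), X.rel s t →
      ∀ ys : Fin (σ.ar s) → Y.D, ¬ Y.rel s ys →
        (List.ofFn (fun i => Q (t i) (ys i))).prod = 0) ∧
    (∀ x x', DistLE (GaifmanAdj X) k x x' →
      ∀ y y', Q x y * Q x' y' = Q x' y' * Q x y)

section Aux

open Finset ComplexOrder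

/-- Projections in a PVM are mutually orthogonal. -/
lemma aux_sum_psd_zero {d : ℕ} {ι : Type*} (s : Finset ι) (A : ι → Matrix (Fin d) (Fin d) ℂ)
    (h : ∑ j ∈ s, (A j)ᴴ * A j = 0) : ∀ j ∈ s, A j = 0 := by
  have hterm : ∀ i, ∀ n, (0 : ℂ) ≤ ((A i)ᴴ * (A i)) n n := by
    intro i n
    rw [Matrix.mul_apply]
    exact Finset.sum_nonneg fun k _ => by
      simpa [Matrix.conjTranspose_apply] using star_mul_self_nonneg (A i k n)
  intro j hj
  ext k n
  have hdiag : ((A j)ᴴ * A j) n n = 0 := by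
    have hsum : ∑ i ∈ s, ((A i)ᴴ * A i) n n = 0 := by
      have := congrFun (congrFun h n) n
      simpa [Matrix.sum_apply] using this
    exact (Finset.sum_eq_zero_iff_of_nonneg (fun i _ => hterm i n)).mp hsum j hj
  rw [Matrix.mul_apply] at hdiag
  have h1 : ∀ m, star (A j m n) * A j m n = 0 := by
    have := (Finset.sum_eq_zero_iff_of_nonneg (fun m _ => by
      simpa [Matrix.conjTranspose_apply] using star_mul_self_nonneg (A j m n))).mp
      (by simpa [Matrix.conjTranspose_apply] using hdiag)
    intro m
    simpa [Matrix.conjTranspose_apply] using this m (Finset.mem_univ m)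
  have := h1 k
  simpa using CStarRing.star_mul_self_eq_zero_iff _ |>.mp this

lemma aux_orth {d : ℕ} {ι : Type*} [Fintype ι] [DecidableEq ι]
    (P : ι → Matrix (Fin d) (Fin d) ℂ)
    (hproj : ∀ a, IsProj (P a)) (hsum : ∑ a, P a = 1) :
    ∀ a b, a ≠ b → P a * P b = 0 := by
  intro a b hab
  have key : ∑ c ∈ Finset.univ.erase b, (P c * P b)ᴴ * (P c * P b) = 0 := by
    have h1 : ∀ c, (P c * P b)ᴴ * (P c * P b) = P b * P c * P b := by
      intro c
      rw [conjTranspose_mul, (hproj b).1, (hproj c).1]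
      calc P b * P c * (P c * P b) = P b * (P c * P c) * P b := by noncomm_ring
        _ = P b * P c * P b := by rw [(hproj c).2]
    simp_rw [h1]
    have h2 : ∑ c ∈ Finset.univ.erase b, P b * P c * P b
        = P b * (∑ c ∈ Finset.univ.erase b, P c) * P b := by
      rw [Finset.mul_sum, Finset.sum_mul]
    have h3 : ∑ c ∈ Finset.univ.erase b, P c = 1 - P b := by
      have := Finset.add_sum_erase Finset.univ P (Finset.mem_univ b)
      rw [hsum] at this
      exact eq_sub_of_add_eq' this
    rw [h2, h3]
    have hb := (hproj b).2
    calc P b * (1 - P b) * P b = P b * P b - P b * P b * P b := by noncomm_ring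
      _ = 0 := by rw [hb, hb]; exact sub_self _
  exact aux_sum_psd_zero _ _ key a (Finset.mem_erase.mpr ⟨hab, Finset.mem_univ a⟩)

/-- Expand a product of sums (noncommutative). -/
lemma aux_prod_ofFn_sum {R : Type*} [Semiring R] {ι : Type*} [Fintype ι] :
    ∀ {n : ℕ} (M : Fin n → ι → R),
      (List.ofFn fun i => ∑ a, M i a).prod
        = ∑ c : Fin n → ι, (List.ofFn fun i => M i (c i)).prod := by
  intro n
  induction n with
  | zero => intro M; simp
  | succ n ih =>
    intro M
    calc (List.ofFn fun i => ∑ a, M i a).prod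
        = (∑ a, M 0 a) * (List.ofFn fun i => ∑ a, M i.succ a).prod := by
          rw [List.ofFn_succ, List.prod_cons]
      _ = ∑ a, ∑ c : Fin n → ι, M 0 a * (List.ofFn fun i => M i.succ (c i)).prod := by
          rw [ih (fun i => M i.succ), Finset.sum_mul]
          exact Finset.sum_congr rfl fun a _ => Finset.mul_sum _ _ _
      _ = ∑ p : ι × (Fin n → ι),
            (List.ofFn fun i => M i (Fin.cons (α := fun _ : Fin (n+1) => ι) p.1 p.2 i)).prod := by
          rw [Fintype.sum_prod_type]
          refine Finset.sum_congr rfl fun a _ => Finset.sum_congr rfl fun c _ => ?_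
          rw [List.ofFn_succ, List.prod_cons]
          simp only [Fin.cons_zero, Fin.cons_succ]
      _ = ∑ c : Fin (n+1) → ι, (List.ofFn fun i => M i (c i)).prod := by
          rw [← (Fin.consEquiv (fun _ : Fin (n+1) => ι)).sum_comp
            (fun c => (List.ofFn fun i => M i (c i)).prod)]
          rfl

lemma aux_distle_succ {D : Type*} {adj : D → D → Prop} {k : ℕ} {x y : D}
    (h : DistLE adj k x y) : DistLE adj (k + 1) x y := by
  induction h with
  | refl k x => exact DistLE.refl _ _
  | step h _ ih => exact DistLE.step h ih

lemma aux_distle_map {σ : Sig} {X X' : Str σ} (f : X.D → X'.D) (hf : IsHom X X' f)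
    {k : ℕ} {x x' : X.D} (h : DistLE (GaifmanAdj X) k x x') :
    DistLE (GaifmanAdj X') k (f x) (f x') := by
  induction h with
  | refl k x => exact DistLE.refl _ _
  | step hadj _ ih =>
    rename_i k x y z _
    by_cases hxy : f x = f y
    · rw [hxy]; exact aux_distle_succ ih
    · obtain ⟨_, s, t, hrel, ⟨i, hi⟩, ⟨j, hj⟩⟩ := hadj
      exact DistLE.step ⟨hxy, s, f ∘ t, hf s t hrel,
        ⟨i, by simp [Function.comp, hi]⟩, ⟨j, by simp [Function.comp, hj]⟩⟩ ih

end Aux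

/-- Composition of classical and quantum homomorphisms: if `X → X'`, `X' ⤳ᵏ Y'`, and
`Y' → Y`, then `X ⤳ᵏ Y`. -/
theorem stmt6 {σ : Sig} (k : ℕ) (X X' Y' Y : Str σ) [Fintype Y'.D] [Fintype Y.D]
    (f : X.D → X'.D) (hf : IsHom X X' f)
    (hq : QHom k X' Y')
    (g : Y'.D → Y.D) (hg : IsHom Y' Y g) :
    QHom k X Y := by
  classical
  obtain ⟨d, hd, Q, hproj, hsum, hvanish, hcomm⟩ := hq
  refine ⟨d, hd, fun x y => ∑ a : Y'.D, if g a = y then Q (f x) a else 0, ?_, ?_, ?_, ?_⟩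
  · -- projections
    intro x y
    have horth := aux_orth (Q (f x)) (fun a => hproj (f x) a) (hsum (f x))
    constructor
    · rw [conjTranspose_sum]
      refine Finset.sum_congr rfl fun a _ => ?_
      split_ifs <;> simp [(hproj (f x) a).1]
    · rw [Finset.sum_mul]
      refine Finset.sum_congr rfl fun a _ => ?_
      rw [Finset.mul_sum]
      by_cases ha : g a = y
      · rw [if_pos ha]
        have : ∀ b : Y'.D, Q (f x) a * (if g b = y then Q (f x) b else 0)
            = if b = a then Q (f x) a else 0 := by
          intro b
          by_cases hba : b = a
          · subst hba; rw [if_pos ha, if_pos rfl, (hproj (f x) b).2]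
          · rw [if_neg hba]
            split_ifs with hb
            · exact horth a b (fun h => hba h.symm)
            · rw [mul_zero]
        simp_rw [this]
        simp
      · rw [if_neg ha]
        simp
  · -- sum to one
    intro x
    rw [Finset.sum_comm]
    have : ∀ a : Y'.D, ∑ y : Y.D, (if g a = y then Q (f x) a else 0) = Q (f x) a := by
      intro a; simp
    simp_rw [this]
    exact hsum (f x)
  · -- vanishing products
    intro s t ht ys hys
    rw [aux_prod_ofFn_sum (fun i a => if g a = ys i then Q (f (t i)) a else 0)]
    refine Finset.sum_eq_zero fun c _ => ?_
    by_cases hall : ∀ i, g (c i) = ys i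
    · have heq : (fun i => if g (c i) = ys i then Q (f (t i)) (c i) else 0)
          = fun i => Q (f (t i)) (c i) := funext fun i => if_pos (hall i)
      rw [heq]
      have hrel' : X'.rel s (f ∘ t) := hf s t ht
      have hnrel : ¬ Y'.rel s c := by
        intro hc
        exact hys (by have := hg s c hc; rwa [show g ∘ c = ys from funext hall] at this)
      exact hvanish s (f ∘ t) hrel' c hnrel
    · push_neg at hall
      obtain ⟨i, hi⟩ := hall
      refine List.prod_eq_zero ?_
      rw [List.mem_ofFn]
      refine ⟨i, ?_⟩
      show (if g (c i) = ys i then Q (f (t i)) (c i) else 0) = 0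
      rw [if_neg hi]
  · -- commutation
    intro x x' hdist y y'
    have hdist' := aux_distle_map f hf hdist
    simp_rw [Finset.sum_mul, Finset.mul_sum]
    conv_lhs => rw [Finset.sum_comm]
    refine Finset.sum_congr rfl fun a _ => Finset.sum_congr rfl fun b _ => ?_
    split_ifs <;> first
      | simp
      | exact hcomm (f x) (f x') hdist' _ _
end

section
/- Marginal modification preserves quantum value for bipartite label cover: Given a bipartite label-cover instance with variable bipartition X₁ ⊔ X₂ and alphabet bipartition A₁ ⊔ A₂ such that every constraint relation is contained in A₁ × A₂, and a k-compatible quantum assignment Q, the modified assignment W obtained by choosing (x̃,ã) with x̃ ∈ X_i, ã ∈ A_j (i ≠ j), fixing â ∈ A_i, and setting W_{x̃,ã} = 0, W_{x̃,â} = Q_{x̃,ã} + Q_{x̃,â}, W_{x,a} = Q_{x,a} otherwise, is again a k-compatible quantum assignment whose value is at least that of Q. -/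
open Matrix

lemma trace_eq_normSq {d : ℕ} (A : Matrix (Fin d) (Fin d) ℂ) :
    (Aᴴ * A).trace = ((∑ j, ∑ i, Complex.normSq (A i j) : ℝ) : ℂ) := by
  push_cast
  simp only [Matrix.trace, Matrix.diag, Matrix.mul_apply, Matrix.conjTranspose_apply,
    Complex.normSq_eq_conj_mul_self]
  rfl

lemma proj_trace {d : ℕ} (P R : Matrix (Fin d) (Fin d) ℂ) (hP : IsProj P) (hR : IsProj R) :
    (P * R).trace = ((P * R)ᴴ * (P * R)).trace := by
  have h1 : (P * R)ᴴ * (P * R) = R * (P * R) := by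
    rw [conjTranspose_mul, hP.1, hR.1, mul_assoc, ← mul_assoc P P R, hP.2]
  rw [h1, Matrix.trace_mul_comm R (P * R), mul_assoc, hR.2]

lemma proj_trace_re_nonneg {d : ℕ} (P R : Matrix (Fin d) (Fin d) ℂ)
    (hP : IsProj P) (hR : IsProj R) : 0 ≤ ((P * R).trace).re := by
  rw [proj_trace P R hP hR, trace_eq_normSq, Complex.ofReal_re]
  apply Finset.sum_nonneg; intro j _; apply Finset.sum_nonneg; intro i _
  exact Complex.normSq_nonneg _

lemma pvm_orth {A : Type} [Fintype A] [DecidableEq A] {d : ℕ} (P : A → Matrix (Fin d) (Fin d) ℂ)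
    (hp : ∀ a, IsProj (P a)) (hs : ∑ a, P a = 1) {a a' : A} (hne : a ≠ a') :
    P a * P a' = 0 := by
  set g : A → A → ℝ := fun j k => ∑ j', ∑ i, Complex.normSq ((P j * P k) i j') with hg
  have htr : ∀ j k, (P j * P k).trace = ((g j k : ℝ) : ℂ) := by
    intro j k
    rw [proj_trace _ _ (hp j) (hp k), trace_eq_normSq]
  have hgnn : ∀ j k, 0 ≤ g j k := by
    intro j k
    apply Finset.sum_nonneg; intro j' _; apply Finset.sum_nonneg; intro i _
    exact Complex.normSq_nonneg _
  have hzero : ∀ j k, g j k = 0 → P j * P k = 0 := by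
    intro j k h
    ext i j'
    have h1 : ∀ j'' ∈ Finset.univ, (0:ℝ) ≤ ∑ i, Complex.normSq ((P j * P k) i j'') := by
      intro j'' _; apply Finset.sum_nonneg; intro i _; exact Complex.normSq_nonneg _
    have h2 := (Finset.sum_eq_zero_iff_of_nonneg h1).mp h j' (Finset.mem_univ _)
    have h3 := (Finset.sum_eq_zero_iff_of_nonneg (fun i _ => Complex.normSq_nonneg _)).mp h2 i
      (Finset.mem_univ _)
    simpa using Complex.normSq_eq_zero.mp h3
  have h1 : ∑ j, ∑ k, (P j * P k).trace = (1 : Matrix (Fin d) (Fin d) ℂ).trace := by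
    have : ((∑ j, P j) * (∑ k, P k)).trace = ∑ j, ∑ k, (P j * P k).trace := by
      rw [Finset.sum_mul]
      rw [Matrix.trace_sum]
      exact Finset.sum_congr rfl fun j _ => by rw [Finset.mul_sum, Matrix.trace_sum]
    rw [← this, hs, one_mul]
  have h2 : ∑ j, (P j * P j).trace = (1 : Matrix (Fin d) (Fin d) ℂ).trace := by
    have : ∀ j : A, (P j * P j).trace = (P j).trace := fun j => by rw [(hp j).2]
    rw [Finset.sum_congr rfl fun j _ => this j, ← Matrix.trace_sum, hs]
  have h3 : ∑ j, ∑ k ∈ Finset.univ.erase j, (P j * P k).trace = 0 := by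
    have : ∀ j : A, ∑ k ∈ Finset.univ.erase j, (P j * P k).trace
        = (∑ k, (P j * P k).trace) - (P j * P j).trace := by
      intro j; exact Finset.sum_erase_eq_sub (Finset.mem_univ j)
    rw [Finset.sum_congr rfl fun j _ => this j, Finset.sum_sub_distrib, h1, h2, sub_self]
  have h4 : ∑ j, ∑ k ∈ Finset.univ.erase j, g j k = 0 := by
    have := h3
    simp only [htr] at this
    exact_mod_cast this
  have h5 : ∀ j ∈ Finset.univ, (0:ℝ) ≤ ∑ k ∈ Finset.univ.erase j, g j k := by
    intro j _; exact Finset.sum_nonneg fun k _ => hgnn j k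
  have h6 := (Finset.sum_eq_zero_iff_of_nonneg h5).mp h4 a (Finset.mem_univ _)
  have h7 := (Finset.sum_eq_zero_iff_of_nonneg (fun k _ => hgnn a k)).mp h6 a'
    (Finset.mem_erase.mpr ⟨hne.symm, Finset.mem_univ _⟩)
  exact hzero a a' h7

/-- A bipartite label-cover instance: variables `X₁ ⊔ X₂`, constraints `E` (binary, with
left endpoint in `X₁` and right endpoint in `X₂`), a positive probability distribution
`π` on the constraints, and admitted labellings `φ_e ⊆ A₁ × A₂` for each constraint. -/
structure BipartiteLC (X₁ X₂ A₁ A₂ : Type) where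
  E : Finset (X₁ × X₂)
  π : X₁ × X₂ → ℝ
  π_pos : ∀ e ∈ E, 0 < π e
  π_sum : ∑ e ∈ E, π e = 1
  φ : X₁ × X₂ → Finset (A₁ × A₂)

/-- Adjacency in the Gaifman graph of a bipartite label-cover instance. -/
def LCAdj {X₁ X₂ A₁ A₂ : Type} (Φ : BipartiteLC X₁ X₂ A₁ A₂) :
    (X₁ ⊕ X₂) → (X₁ ⊕ X₂) → Prop := fun v w =>
  ∃ e ∈ Φ.E, (v = Sum.inl e.1 ∧ w = Sum.inr e.2) ∨ (v = Sum.inr e.2 ∧ w = Sum.inl e.1)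

/-- A quantum assignment: a PVM `{Q_{x,a}}_{a}` on `ℂ^d` for each variable `x`. -/
def IsQAssign {X₁ X₂ A₁ A₂ : Type} [Fintype A₁] [Fintype A₂] {d : ℕ}
    (Q : X₁ ⊕ X₂ → A₁ ⊕ A₂ → Matrix (Fin d) (Fin d) ℂ) : Prop :=
  (∀ x a, IsProj (Q x a)) ∧ (∀ x, ∑ a, Q x a = 1)

/-- `k`-compatibility: projectors at Gaifman distance at most `k` commute. -/
def KCompat {X₁ X₂ A₁ A₂ : Type} (Φ : BipartiteLC X₁ X₂ A₁ A₂) (k : ℕ) {d : ℕ}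
    (Q : X₁ ⊕ X₂ → A₁ ⊕ A₂ → Matrix (Fin d) (Fin d) ℂ) : Prop :=
  ∀ v w, DistLE (LCAdj Φ) k v w → ∀ a b, Q v a * Q w b = Q w b * Q v a

/-- The value of a quantum assignment:
`(1/dim H) · E_{e∼π} Σ_{(a₁,a₂)∈φ_e} tr(Q_{e₁,a₁} Q_{e₂,a₂})`. -/
noncomputable def qValue {X₁ X₂ A₁ A₂ : Type} (Φ : BipartiteLC X₁ X₂ A₁ A₂) {d : ℕ}
    (Q : X₁ ⊕ X₂ → A₁ ⊕ A₂ → Matrix (Fin d) (Fin d) ℂ) : ℝ :=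
  (1 / d) * ∑ e ∈ Φ.E, Φ.π e *
    ∑ p ∈ Φ.φ e,
      ((Q (Sum.inl e.1) (Sum.inl p.1) * Q (Sum.inr e.2) (Sum.inr p.2)).trace).re

/-- `SameSide v a`: the variable `v` and the label `a` lie in matching parts of the
bipartitions (`v ∈ X_i` and `a ∈ A_i` for the same `i`). -/
def SameSide {X₁ X₂ A₁ A₂ : Type} (v : X₁ ⊕ X₂) (a : A₁ ⊕ A₂) : Prop :=
  v.isLeft = a.isLeft

/-- The modified assignment: `W_{v,b} = 0`, `W_{v,c} = Q_{v,b} + Q_{v,c}`, and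
`W_{x,a} = Q_{x,a}` otherwise. -/
def ModAssign {X₁ X₂ A₁ A₂ : Type} [DecidableEq X₁] [DecidableEq X₂] [DecidableEq A₁]
    [DecidableEq A₂] {d : ℕ}
    (Q : X₁ ⊕ X₂ → A₁ ⊕ A₂ → Matrix (Fin d) (Fin d) ℂ)
    (v : X₁ ⊕ X₂) (b c : A₁ ⊕ A₂) : X₁ ⊕ X₂ → A₁ ⊕ A₂ → Matrix (Fin d) (Fin d) ℂ :=
  fun x a =>
    if x = v ∧ a = b then 0
    else if x = v ∧ a = c then Q v b + Q v c
    else Q x a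

/-- Marginal modification preserves the quantum value for bipartite label cover: given a
`k`-compatible quantum assignment `Q`, a variable `v` and labels `b` (on the side not
matching `v`) and `c` (on the side matching `v`), the modified assignment is again a
`k`-compatible quantum assignment whose value is at least that of `Q`. -/
theorem stmt12 {X₁ X₂ A₁ A₂ : Type} [Fintype A₁] [Fintype A₂]
    [DecidableEq X₁] [DecidableEq X₂] [DecidableEq A₁] [DecidableEq A₂]
    (Φ : BipartiteLC X₁ X₂ A₁ A₂) (k d : ℕ)
    (Q : X₁ ⊕ X₂ → A₁ ⊕ A₂ → Matrix (Fin d) (Fin d) ℂ)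
    (hQ : IsQAssign Q) (hk : KCompat Φ k Q)
    (v : X₁ ⊕ X₂) (b c : A₁ ⊕ A₂)
    (hb : ¬ SameSide v b) (hc : SameSide v c) :
    IsQAssign (ModAssign Q v b c) ∧ KCompat Φ k (ModAssign Q v b c) ∧
      qValue Φ Q ≤ qValue Φ (ModAssign Q v b c) := by
  obtain ⟨hproj, hsum⟩ := hQ
  have hbc : b ≠ c := fun h => hb (by rw [h]; exact hc)
  have horth : ∀ x (a a' : A₁ ⊕ A₂), a ≠ a' → Q x a * Q x a' = 0 := fun x a a' h =>
    pvm_orth (Q x) (hproj x) (hsum x) h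
  set W := ModAssign Q v b c with hWset
  have hWdef : ∀ x a, W x a =
      if x = v ∧ a = b then 0 else if x = v ∧ a = c then Q v b + Q v c else Q x a :=
    fun _ _ => rfl
  have hproj0 : IsProj (0 : Matrix (Fin d) (Fin d) ℂ) := ⟨Matrix.conjTranspose_zero, by simp⟩
  -- W consists of projections
  have hWproj : ∀ x a, IsProj (W x a) := by
    intro x a
    rw [hWdef]
    split_ifs with h1 h2
    · exact hproj0
    · constructor
      · rw [Matrix.conjTranspose_add, (hproj v b).1, (hproj v c).1]
      · rw [add_mul, mul_add, mul_add, (hproj v b).2, (hproj v c).2,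
          horth v b c hbc, horth v c b hbc.symm]
        simp
    · exact hproj x a
  -- W PVMs sum to 1
  have hWsum : ∀ x, ∑ a, W x a = 1 := by
    intro x
    by_cases hx : x = v
    · have hWv : ∀ a, W x a
          = Q v a + (if a = c then Q v b else 0) - (if a = b then Q v b else 0) := by
        intro a
        rw [hWdef]
        by_cases h1 : a = b
        · subst h1; simp [hx, hbc]
        · by_cases h2 : a = c
          · subst h2; rw [if_neg (by tauto), if_pos ⟨hx, rfl⟩]
            simp [h1]; abel
          · simp [h1, h2, hx]
      rw [Finset.sum_congr rfl fun a _ => hWv a]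
      rw [Finset.sum_sub_distrib, Finset.sum_add_distrib]
      simp [Finset.sum_ite_eq', hsum, hx]
    · have h : ∀ a, W x a = Q x a := by intro a; rw [hWdef]; simp [hx]
      rw [Finset.sum_congr rfl fun a _ => h a, hsum]
  -- forms of W entries
  have form : ∀ z a, W z a = 0 ∨ W z a = Q z a ∨ W z a = Q z b + Q z c := by
    intro z a
    rw [hWdef]
    split_ifs with h1 h2
    · exact Or.inl rfl
    · exact Or.inr (Or.inr (by rw [h2.1]))
    · exact Or.inr (Or.inl rfl)
  -- k-compatibility
  have hWcompat : KCompat Φ k W := by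
    intro x y hd a a'
    have H := hk x y hd
    rcases form x a with h | h | h <;> rcases form y a' with h' | h' | h' <;>
      rw [h, h'] <;>
      simp only [mul_add, add_mul, H, zero_mul, mul_zero] <;>
      first | rfl | abel
  refine ⟨⟨hWproj, hWsum⟩, hWcompat, ?_⟩
  -- value inequality
  unfold qValue
  apply mul_le_mul_of_nonneg_left _ (by positivity)
  apply Finset.sum_le_sum
  intro e he
  apply mul_le_mul_of_nonneg_left _ (le_of_lt (Φ.π_pos e he))
  apply Finset.sum_le_sum
  intro p _
  have hgen : ∀ (x : X₁ ⊕ X₂) (a : A₁ ⊕ A₂), a.isLeft = x.isLeft →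
      ∃ R, IsProj R ∧ W x a = Q x a + R := by
    intro x a hxa
    have hne1 : ¬(x = v ∧ a = b) := by
      rintro ⟨rfl, rfl⟩; exact hb hxa.symm
    by_cases h2 : x = v ∧ a = c
    · refine ⟨Q v b, hproj v b, ?_⟩
      rw [hWdef, if_neg hne1, if_pos h2, h2.1, h2.2]
      exact add_comm _ _
    · exact ⟨0, hproj0, by rw [hWdef, if_neg hne1, if_neg h2, add_zero]⟩
  obtain ⟨R₁, hR₁, hW₁⟩ := hgen (Sum.inl e.1) (Sum.inl p.1) rfl
  obtain ⟨R₂, hR₂, hW₂⟩ := hgen (Sum.inr e.2) (Sum.inr p.2) rfl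
  rw [hW₁, hW₂, add_mul, mul_add, mul_add]
  have n1 := proj_trace_re_nonneg (Q (Sum.inl e.1) (Sum.inl p.1)) R₂ (hproj _ _) hR₂
  have n2 := proj_trace_re_nonneg R₁ (Q (Sum.inr e.2) (Sum.inr p.2)) hR₁ (hproj _ _)
  have n3 := proj_trace_re_nonneg R₁ R₂ hR₁ hR₂
  simp only [Matrix.trace_add, Complex.add_re]
  linarith
end

section
/- Collapse of fully compatible quantum assignments to classical assignments: if Φ is a connected CSP instance whose Gaifman graph has diameter δ, then any perfect δ-compatible quantum assignment for Φ yields a perfect classical assignment; i.e., if all projectors across all variables pairwise commute, the instance is classically satisfiable. -/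
open Matrix

/-- Adjacency in the Gaifman graph of a CSP instance with constraint set `C` (a
constraint is an arity `r`, a tuple of variables, and a set of admitted label tuples):
two distinct variables appearing in a common constraint. -/
def CSPAdj {X A : Type*} (C : Set (Σ r : ℕ, (Fin r → X) × Set (Fin r → A))) :
    X → X → Prop := fun x x' =>
  x ≠ x' ∧ ∃ c ∈ C, (∃ i, c.2.1 i = x) ∧ (∃ i, c.2.1 i = x')

/-- Collapse of fully compatible quantum assignments to classical assignments: if the
Gaifman graph of the CSP instance `C` is connected with diameter (at most) `δ`, then any
perfect `δ`-compatible quantum assignment yields a perfect classical assignment. -/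
theorem stmt16 {X A : Type*} [Fintype A]
    (C : Set (Σ r : ℕ, (Fin r → X) × Set (Fin r → A)))
    (δ : ℕ)
    (hconn : ∀ x x', DistLE (CSPAdj C) δ x x')
    (d : ℕ) (hd : 0 < d)
    (Q : X → A → Matrix (Fin d) (Fin d) ℂ)
    (hproj : ∀ x a, IsProj (Q x a))
    (hsum : ∀ x, ∑ a, Q x a = 1)
    (hperf : ∀ c ∈ C, ∀ av : Fin c.1 → A, av ∉ c.2.2 →
      (List.ofFn (fun i => Q (c.2.1 i) (av i))).prod = 0)
    (hcompat : ∀ x x', DistLE (CSPAdj C) δ x x' →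
      ∀ a a', Q x a * Q x' a' = Q x' a' * Q x a) :
    ∃ f : X → A, ∀ c ∈ C, (fun i => f (c.2.1 i)) ∈ c.2.2 := by
  classical
  have hcomm : ∀ x a x' a', Q x a * Q x' a' = Q x' a' * Q x a := by
    intro x a x' a'; exact hcompat x x' (hconn x x') a a'
  -- "Good" matrices: finite products of the Q's
  let Good : Matrix (Fin d) (Fin d) ℂ → Prop := fun P => ∃ l : List (X × A),
    P = (l.map (fun p => Q p.1 p.2)).prod
  -- every Q commutes with every Good matrix
  have hQGood : ∀ x a (P : Matrix (Fin d) (Fin d) ℂ), Good P → Q x a * P = P * Q x a := by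
    rintro x a P ⟨l, rfl⟩
    induction l with
    | nil => simp
    | cons p t ih =>
        simp only [List.map_cons, List.prod_cons]
        rw [← mul_assoc, hcomm x a p.1 p.2, mul_assoc, ih, ← mul_assoc]
  -- the set of ranks of nonzero Good matrices is nonempty (contains rank of 1)
  have hone : Good (1 : Matrix (Fin d) (Fin d) ℂ) ∧ (1 : Matrix (Fin d) (Fin d) ℂ) ≠ 0 := by
    refine ⟨⟨[], by simp⟩, ?_⟩
    intro h
    have h2 := congrFun (congrFun h ⟨0, hd⟩) ⟨0, hd⟩
    simp [Matrix.one_apply] at h2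
  let T : Set ℕ := {n | ∃ P : Matrix (Fin d) (Fin d) ℂ, Good P ∧ P ≠ 0 ∧ P.rank = n}
  have hT : T.Nonempty := ⟨(1 : Matrix (Fin d) (Fin d) ℂ).rank, 1, hone.1, hone.2, rfl⟩
  obtain ⟨P, hPg, hP0, hPrank⟩ := Nat.sInf_mem hT
  have hmin : ∀ P' : Matrix (Fin d) (Fin d) ℂ, Good P' → P' ≠ 0 → P.rank ≤ P'.rank := by
    intro P' h1 h2
    rw [hPrank]
    exact Nat.sInf_le ⟨P', h1, h2, rfl⟩
  -- for each x, some a with Q x a * P = P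
  have key : ∀ x : X, ∃ a : A, Q x a * P = P := by
    intro x
    -- some a with Q x a * P ≠ 0
    have hne : ∃ a, Q x a * P ≠ 0 := by
      by_contra h
      push_neg at h
      apply hP0
      have : (∑ a, Q x a) * P = 0 := by
        rw [Finset.sum_mul]
        exact Finset.sum_eq_zero fun a _ => h a
      rwa [hsum x, one_mul] at this
    obtain ⟨a, ha⟩ := hne
    refine ⟨a, ?_⟩
    have hgood' : Good (Q x a * P) := by
      obtain ⟨l, rfl⟩ := hPg
      exact ⟨(x, a) :: l, by simp⟩
    -- ranks are equal
    have hle : (Q x a * P).rank ≤ P.rank := Matrix.rank_mul_le_right _ _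
    have hge : P.rank ≤ (Q x a * P).rank := hmin _ hgood' ha
    have hrank : (Q x a * P).rank = P.rank := le_antisymm hle hge
    -- ranges are equal
    have hrange : LinearMap.range (Q x a * P).mulVecLin =
        LinearMap.range P.mulVecLin := by
      apply Submodule.eq_of_le_of_finrank_eq
      · rintro v ⟨w, rfl⟩
        refine ⟨Q x a *ᵥ w, ?_⟩
        simp only [Matrix.mulVecLin_apply]
        rw [hQGood x a P hPg, ← Matrix.mulVec_mulVec]
      · exact hrank
    -- conclude Q x a * P = P
    have hfix : ∀ v : Fin d → ℂ, (Q x a * P) *ᵥ v = P *ᵥ v := by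
      intro v
      have hmem : P *ᵥ v ∈ LinearMap.range (Q x a * P).mulVecLin := by
        rw [hrange]; exact ⟨v, rfl⟩
      obtain ⟨w, hw⟩ := hmem
      simp only [Matrix.mulVecLin_apply] at hw
      calc (Q x a * P) *ᵥ v = Q x a *ᵥ (P *ᵥ v) := by rw [Matrix.mulVec_mulVec]
        _ = Q x a *ᵥ ((Q x a * P) *ᵥ w) := by rw [hw]
        _ = (Q x a * (Q x a * P)) *ᵥ w := by rw [Matrix.mulVec_mulVec]
        _ = (Q x a * P) *ᵥ w := by rw [← mul_assoc, (hproj x a).2]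
        _ = P *ᵥ v := hw
    ext i j
    have := congrFun (hfix (Pi.single j 1)) i
    rwa [Matrix.mulVec_single_one, Matrix.mulVec_single_one] at this
  choose f hf using key
  refine ⟨f, fun c hc => ?_⟩
  by_contra hmem
  have hzero := hperf c hc (fun i => f (c.2.1 i)) hmem
  -- the product fixes P, hence is nonzero
  have hfixP : ∀ (l : List X), ((List.map (fun x => Q x (f x)) l).prod) * P = P := by
    intro l
    induction l with
    | nil => simp
    | cons x t ih => rw [List.map_cons, List.prod_cons, mul_assoc, ih, hf]
  have : (List.ofFn (fun i => Q (c.2.1 i) (f (c.2.1 i)))).prod * P = P := by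
    have hl : List.ofFn (fun i => Q (c.2.1 i) (f (c.2.1 i))) =
        List.map (fun x => Q x (f x)) (List.ofFn c.2.1) := by
      rw [List.map_ofFn]; rfl
    rw [hl]; exact hfixP _
  rw [hzero, zero_mul] at this
  exact hP0 this.symm
end
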